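/- Let ε > 0, c ≥ 0, and let M be a matrix game with value v. Consider a repeated game with error cε relative to M, and suppose both players' average regrets with respect to the observed payoffs satisfy limsup_{t→∞} r(t) ≤ ε and limsup_{t→∞} r₂(t) ≤ ε. Then limsup_{t→∞} u(br, σ̂₂(t)) ≤ v + 2(c+1)ε and liminf_{t→∞} u(σ̂₁(t), br) ≥ v − 2(c+1)ε, where u and v refer to the exact matrix M. -/

import Mathlib

open Filter Finset

noncomputable section

/-- A mixed strategy: a probability vector over `Fin k`. -/
def IsMixed {k : ℕ} (σ : Fin k → ℝ) : Prop :=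
  (∀ i, 0 ≤ σ i) ∧ ∑ i, σ i = 1

/-- Expected payoff `σ₁ M σ₂` to player 1. -/
def pay {m n : ℕ} (M : Fin m → Fin n → ℝ) (σ₁ : Fin m → ℝ) (σ₂ : Fin n → ℝ) : ℝ :=
  ∑ i, ∑ j, σ₁ i * M i j * σ₂ j

/-- `u(br, σ₂) = max_{σ₁} σ₁ M σ₂`. -/
def brVal1 {m n : ℕ} (M : Fin m → Fin n → ℝ) (σ₂ : Fin n → ℝ) : ℝ :=
  sSup {x : ℝ | ∃ σ₁, IsMixed σ₁ ∧ x = pay M σ₁ σ₂}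

/-- `u(σ₁, br) = min_{σ₂} σ₁ M σ₂`. -/
def brVal2 {m n : ℕ} (M : Fin m → Fin n → ℝ) (σ₁ : Fin m → ℝ) : ℝ :=
  sInf {x : ℝ | ∃ σ₂, IsMixed σ₂ ∧ x = pay M σ₁ σ₂}

/-- `M` has value `v`: `max_{σ₁} min_{σ₂} σ₁ M σ₂ = min_{σ₂} max_{σ₁} σ₁ M σ₂ = v`. -/
def HasValue {m n : ℕ} (M : Fin m → Fin n → ℝ) (v : ℝ) : Prop :=
  sSup {x : ℝ | ∃ σ₁, IsMixed σ₁ ∧ x = brVal2 M σ₁} = v ∧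
  sInf {x : ℝ | ∃ σ₂, IsMixed σ₂ ∧ x = brVal1 M σ₂} = v

/-- `(σ₁, σ₂)` is an `ε`-equilibrium of `M`. -/
def IsEpsEquilibrium {m n : ℕ} (M : Fin m → Fin n → ℝ) (ε : ℝ)
    (σ₁ : Fin m → ℝ) (σ₂ : Fin n → ℝ) : Prop :=
  brVal1 M σ₂ - pay M σ₁ σ₂ ≤ ε ∧ pay M σ₁ σ₂ - brVal2 M σ₁ ≤ ε

/-- Empirical frequencies of the action sequence `a` over steps `1, …, t`. -/
def empFreq {k : ℕ} (a : ℕ → Fin k) (t : ℕ) : Fin k → ℝ :=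
  fun x => (((Finset.Icc 1 t).filter (fun s => a s = x)).card : ℝ) / t

/-- `g(t)`: average payoff to player 1 over steps `1, …, t`. -/
def avgPay {m n : ℕ} (M : Fin (m+1) → Fin (n+1) → ℝ)
    (iseq : ℕ → Fin (m+1)) (jseq : ℕ → Fin (n+1)) (t : ℕ) : ℝ :=
  (∑ s ∈ Finset.Icc 1 t, M (iseq s) (jseq s)) / t

/-- `g_max(t)`: maximal average payoff over player 1's pure actions. -/
def gmax {m n : ℕ} (M : Fin (m+1) → Fin (n+1) → ℝ)
    (jseq : ℕ → Fin (n+1)) (t : ℕ) : ℝ :=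
  (Finset.univ.sup' Finset.univ_nonempty (fun i => ∑ s ∈ Finset.Icc 1 t, M i (jseq s))) / t

/-- `r(t)`: average regret of player 1. -/
def regret1 {m n : ℕ} (M : Fin (m+1) → Fin (n+1) → ℝ)
    (iseq : ℕ → Fin (m+1)) (jseq : ℕ → Fin (n+1)) (t : ℕ) : ℝ :=
  gmax M jseq t - avgPay M iseq jseq t

/-- `r₂(t)`: average regret of player 2 (whose payoffs are `1 - a_{ij}`). -/
def regret2 {m n : ℕ} (M : Fin (m+1) → Fin (n+1) → ℝ)
    (iseq : ℕ → Fin (m+1)) (jseq : ℕ → Fin (n+1)) (t : ℕ) : ℝ :=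
  (Finset.univ.sup' Finset.univ_nonempty
      (fun j => ∑ s ∈ Finset.Icc 1 t, (1 - M (iseq s) j))) / t -
    (∑ s ∈ Finset.Icc 1 t, (1 - M (iseq s) (jseq s))) / t

/-- `g(t)`: average observed payoff over steps `1, …, t`. -/
def avgObs {m n : ℕ} (aobs : ℕ → Fin (m+1) → Fin (n+1) → ℝ)
    (iseq : ℕ → Fin (m+1)) (jseq : ℕ → Fin (n+1)) (t : ℕ) : ℝ :=
  (∑ s ∈ Finset.Icc 1 t, aobs s (iseq s) (jseq s)) / t

/-- `g_max(t)`: maximal average observed payoff over player 1's pure actions. -/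
def gmaxObs {m n : ℕ} (aobs : ℕ → Fin (m+1) → Fin (n+1) → ℝ)
    (jseq : ℕ → Fin (n+1)) (t : ℕ) : ℝ :=
  (Finset.univ.sup' Finset.univ_nonempty
    (fun i => ∑ s ∈ Finset.Icc 1 t, aobs s i (jseq s))) / t

/-- `r(t)`: player 1's average regret with respect to the observed payoffs. -/
def regretObs1 {m n : ℕ} (aobs : ℕ → Fin (m+1) → Fin (n+1) → ℝ)
    (iseq : ℕ → Fin (m+1)) (jseq : ℕ → Fin (n+1)) (t : ℕ) : ℝ :=
  gmaxObs aobs jseq t - avgObs aobs iseq jseq t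

/-- `r₂(t)`: player 2's average regret with respect to the observed payoffs
`1 - a_{ij}(s)`. -/
def regretObs2 {m n : ℕ} (aobs : ℕ → Fin (m+1) → Fin (n+1) → ℝ)
    (iseq : ℕ → Fin (m+1)) (jseq : ℕ → Fin (n+1)) (t : ℕ) : ℝ :=
  (Finset.univ.sup' Finset.univ_nonempty
      (fun j => ∑ s ∈ Finset.Icc 1 t, (1 - aobs s (iseq s) j))) / t -
    (∑ s ∈ Finset.Icc 1 t, (1 - aobs s (iseq s) (jseq s))) / t

/-- The observed payoffs `aobs` form a repeated game with error `η` relative to `M`,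
with error threshold time `t₀`. -/
def ErrorBoundedFrom {m n : ℕ} (aobs : ℕ → Fin (m+1) → Fin (n+1) → ℝ)
    (M : Fin (m+1) → Fin (n+1) → ℝ) (η : ℝ) (t₀ : ℕ) : Prop :=
  ∀ s, t₀ ≤ s → ∀ i j, |aobs s i j - M i j| < η

section AuxLemmas

lemma pay_eq' {m n : ℕ} (M : Fin m → Fin n → ℝ) (σ₁ : Fin m → ℝ) (σ₂ : Fin n → ℝ) :
    pay M σ₁ σ₂ = ∑ i, σ₁ i * ∑ j, M i j * σ₂ j := by
  unfold pay
  refine Finset.sum_congr rfl fun i _ => ?_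
  rw [Finset.mul_sum]
  exact Finset.sum_congr rfl fun j _ => by ring

lemma pay_eq'' {m n : ℕ} (M : Fin m → Fin n → ℝ) (σ₁ : Fin m → ℝ) (σ₂ : Fin n → ℝ) :
    pay M σ₁ σ₂ = ∑ j, (∑ i, σ₁ i * M i j) * σ₂ j := by
  unfold pay
  rw [Finset.sum_comm]
  refine Finset.sum_congr rfl fun j _ => ?_
  rw [Finset.sum_mul]

/-- The pure strategy putting all weight on `i`. -/
def pureStrat {k : ℕ} (i : Fin k) : Fin k → ℝ := fun i' => if i' = i then 1 else 0

lemma pureStrat_mixed {k : ℕ} (i : Fin k) : IsMixed (pureStrat i) := by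
  constructor
  · intro i'; unfold pureStrat; positivity
  · simp [pureStrat]

lemma pay_pure1 {m n : ℕ} (M : Fin m → Fin n → ℝ) (i : Fin m) (σ₂ : Fin n → ℝ) :
    pay M (pureStrat i) σ₂ = ∑ j, M i j * σ₂ j := by
  rw [pay_eq']
  simp [pureStrat, ite_mul]

lemma pay_pure2 {m n : ℕ} (M : Fin m → Fin n → ℝ) (σ₁ : Fin m → ℝ) (j : Fin n) :
    pay M σ₁ (pureStrat j) = ∑ i, σ₁ i * M i j := by
  rw [pay_eq'']
  simp [pureStrat, mul_ite]

lemma brVal1_eq {m n : ℕ} (M : Fin (m+1) → Fin (n+1) → ℝ) (σ₂ : Fin (n+1) → ℝ) :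
    brVal1 M σ₂ = Finset.univ.sup' Finset.univ_nonempty (fun i => ∑ j, M i j * σ₂ j) := by
  apply IsGreatest.csSup_eq
  constructor
  · obtain ⟨i₀, -, hi₀⟩ :=
      Finset.exists_mem_eq_sup' (Finset.univ_nonempty) (fun i => ∑ j, M i j * σ₂ j)
    exact ⟨pureStrat i₀, pureStrat_mixed i₀, by rw [pay_pure1, hi₀]⟩
  · rintro x ⟨σ₁, ⟨hpos, hsum⟩, rfl⟩
    rw [pay_eq']
    calc ∑ i, σ₁ i * ∑ j, M i j * σ₂ j
        ≤ ∑ i, σ₁ i * (Finset.univ.sup' Finset.univ_nonempty fun i => ∑ j, M i j * σ₂ j) :=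
          Finset.sum_le_sum fun i _ =>
            mul_le_mul_of_nonneg_left (Finset.le_sup' (fun i => ∑ j, M i j * σ₂ j) (Finset.mem_univ i)) (hpos i)
      _ = _ := by rw [← Finset.sum_mul, hsum, one_mul]

lemma brVal2_eq {m n : ℕ} (M : Fin (m+1) → Fin (n+1) → ℝ) (σ₁ : Fin (m+1) → ℝ) :
    brVal2 M σ₁ = Finset.univ.inf' Finset.univ_nonempty (fun j => ∑ i, σ₁ i * M i j) := by
  apply IsLeast.csInf_eq
  constructor
  · obtain ⟨j₀, -, hj₀⟩ :=
      Finset.exists_mem_eq_inf' (Finset.univ_nonempty) (fun j => ∑ i, σ₁ i * M i j)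
    exact ⟨pureStrat j₀, pureStrat_mixed j₀, by rw [pay_pure2, hj₀]⟩
  · rintro x ⟨σ₂, ⟨hpos, hsum⟩, rfl⟩
    rw [pay_eq'']
    calc (Finset.univ.inf' Finset.univ_nonempty fun j => ∑ i, σ₁ i * M i j)
        = ∑ j, (Finset.univ.inf' Finset.univ_nonempty fun j => ∑ i, σ₁ i * M i j) * σ₂ j := by
          rw [← Finset.mul_sum, hsum, mul_one]
      _ ≤ ∑ j, (∑ i, σ₁ i * M i j) * σ₂ j :=
          Finset.sum_le_sum fun j _ =>
            mul_le_mul_of_nonneg_right (Finset.inf'_le (fun j => ∑ i, σ₁ i * M i j) (Finset.mem_univ j)) (hpos j)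

lemma v_le_brVal1 {m n : ℕ} {M : Fin (m+1) → Fin (n+1) → ℝ}
    (hM : ∀ i j, M i j ∈ Set.Icc (0:ℝ) 1) {v : ℝ} (hv : HasValue M v)
    {σ₂ : Fin (n+1) → ℝ} (h : IsMixed σ₂) : v ≤ brVal1 M σ₂ := by
  rw [← hv.2]
  refine csInf_le ⟨0, ?_⟩ ⟨σ₂, h, rfl⟩
  rintro x ⟨σ₂', hσ', rfl⟩
  rw [brVal1_eq]
  refine le_trans ?_ (Finset.le_sup' _ (Finset.mem_univ 0))
  exact Finset.sum_nonneg fun j _ => mul_nonneg (hM 0 j).1 (hσ'.1 j)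

lemma brVal2_le_v {m n : ℕ} {M : Fin (m+1) → Fin (n+1) → ℝ}
    (hM : ∀ i j, M i j ∈ Set.Icc (0:ℝ) 1) {v : ℝ} (hv : HasValue M v)
    {σ₁ : Fin (m+1) → ℝ} (h : IsMixed σ₁) : brVal2 M σ₁ ≤ v := by
  rw [← hv.1]
  refine le_csSup ⟨1, ?_⟩ ⟨σ₁, h, rfl⟩
  rintro x ⟨σ₁', hσ', rfl⟩
  rw [brVal2_eq]
  refine le_trans (Finset.inf'_le _ (Finset.mem_univ 0)) ?_
  calc ∑ i, σ₁' i * M i 0 ≤ ∑ i, σ₁' i * 1 :=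
        Finset.sum_le_sum fun i _ => mul_le_mul_of_nonneg_left (hM i 0).2 (hσ'.1 i)
    _ = 1 := by simp only [mul_one]; exact hσ'.2

lemma sum_mul_empFreq {k : ℕ} (a : ℕ → Fin k) (t : ℕ) (f : Fin k → ℝ) :
    ∑ x, f x * empFreq a t x = (∑ s ∈ Finset.Icc 1 t, f (a s)) / t := by
  unfold empFreq
  rw [← Finset.sum_fiberwise' (Finset.Icc 1 t) a f, Finset.sum_div]
  refine Finset.sum_congr rfl fun x _ => ?_
  rw [Finset.sum_const, nsmul_eq_mul]
  ring

lemma empFreq_mixed {k : ℕ} (a : ℕ → Fin k) {t : ℕ} (ht : 1 ≤ t) :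
    IsMixed (empFreq a t) := by
  have hT : (0:ℝ) < t := by exact_mod_cast ht
  constructor
  · intro x; unfold empFreq; positivity
  · have h := sum_mul_empFreq a t (fun _ => (1:ℝ))
    simp only [one_mul] at h
    rw [h, Finset.sum_const, Nat.card_Icc, Nat.add_sub_cancel, nsmul_eq_mul, mul_one,
      div_self hT.ne']

lemma abs_sum_sub_le (t₀ t : ℕ) (η : ℝ) (hη : 0 ≤ η) (f g : ℕ → ℝ)
    (hb : ∀ s, |f s - g s| ≤ 1)
    (he : ∀ s, t₀ ≤ s → |f s - g s| ≤ η) :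
    |∑ s ∈ Finset.Icc 1 t, f s - ∑ s ∈ Finset.Icc 1 t, g s| ≤ t₀ + t * η := by
  rw [← Finset.sum_sub_distrib]
  calc |∑ s ∈ Finset.Icc 1 t, (f s - g s)| ≤ ∑ s ∈ Finset.Icc 1 t, |f s - g s| :=
        Finset.abs_sum_le_sum_abs _ _
    _ ≤ ∑ s ∈ Finset.Icc 1 t, ((if s < t₀ then (1:ℝ) else 0) + η) := by
        refine Finset.sum_le_sum fun s _ => ?_
        by_cases h : s < t₀
        · simp only [h, if_true]; linarith [hb s]
        · simp only [h, if_false]; linarith [he s (not_lt.1 h)]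
    _ = (((Finset.Icc 1 t).filter (fun s => s < t₀)).card : ℝ)
          + ((Finset.Icc 1 t).card : ℝ) * η := by
        rw [Finset.sum_add_distrib, Finset.sum_boole, Finset.sum_const, nsmul_eq_mul]
    _ ≤ t₀ + t * η := by
        have h1 : ((Finset.Icc 1 t).filter (fun s => s < t₀)).card ≤ t₀ := by
          calc ((Finset.Icc 1 t).filter (fun s => s < t₀)).card
              ≤ (Finset.Icc 1 t₀).card := by
                refine Finset.card_le_card fun s hs => ?_
                rw [Finset.mem_filter, Finset.mem_Icc] at hs
                exact Finset.mem_Icc.2 ⟨hs.1.1, Nat.le_of_lt hs.2⟩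
            _ = t₀ := by rw [Nat.card_Icc, Nat.add_sub_cancel]
        have h2 : ((Finset.Icc 1 t).card : ℝ) = t := by
          rw [Nat.card_Icc, Nat.add_sub_cancel]
        rw [h2]
        have : (((Finset.Icc 1 t).filter (fun s => s < t₀)).card : ℝ) ≤ t₀ := by
          exact_mod_cast h1
        linarith

lemma sup'_div_const {α : Type*} {s : Finset α} (H : s.Nonempty) (f : α → ℝ) {c : ℝ}
    (hc : 0 < c) : s.sup' H (fun a => f a / c) = s.sup' H f / c := by
  obtain ⟨a, ha, hax⟩ := Finset.exists_mem_eq_sup' H f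
  refine le_antisymm (Finset.sup'_le _ _ fun b hb => by gcongr; exact Finset.le_sup' f hb) ?_
  rw [hax]
  exact Finset.le_sup' (fun a => f a / c) ha

lemma inf'_div_const {α : Type*} {s : Finset α} (H : s.Nonempty) (f : α → ℝ) {c : ℝ}
    (hc : 0 < c) : s.inf' H (fun a => f a / c) = s.inf' H f / c := by
  obtain ⟨a, ha, hax⟩ := Finset.exists_mem_eq_inf' H f
  refine le_antisymm ?_ (Finset.le_inf' _ _ fun b hb => by gcongr; exact Finset.inf'_le f hb)
  rw [hax]
  exact Finset.inf'_le (fun a => f a / c) ha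

lemma sup'_const_sub {α : Type*} {s : Finset α} (H : s.Nonempty) (f : α → ℝ) (c : ℝ) :
    s.sup' H (fun a => c - f a) = c - s.inf' H f := by
  obtain ⟨a, ha, hax⟩ := Finset.exists_mem_eq_inf' H f
  refine le_antisymm (Finset.sup'_le _ _ fun b hb => by
    have := Finset.inf'_le f hb; linarith) ?_
  rw [hax]
  exact Finset.le_sup' (fun a => c - f a) ha

end AuxLemmas

/-- In a repeated game with error `cε`, if both players' average regrets with
respect to the observed payoffs satisfy `limsup r(t) ≤ ε`, then
`limsup u(br, σ̂₂(t)) ≤ v + 2(c+1)ε` and `liminf u(σ̂₁(t), br) ≥ v − 2(c+1)ε`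
(with `u`, `v` referring to the exact game `M`). -/
theorem error_game_br_bounds (m n : ℕ) (M : Fin (m+1) → Fin (n+1) → ℝ)
    (hM : ∀ i j, M i j ∈ Set.Icc (0:ℝ) 1)
    (v ε c : ℝ) (hε : 0 < ε) (hc : 0 ≤ c) (hv : HasValue M v)
    (aobs : ℕ → Fin (m+1) → Fin (n+1) → ℝ)
    (haobs : ∀ s i j, aobs s i j ∈ Set.Icc (0:ℝ) 1)
    (herr : ∃ t₀ : ℕ, ErrorBoundedFrom aobs M (c * ε) t₀)
    (iseq : ℕ → Fin (m+1)) (jseq : ℕ → Fin (n+1))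
    (hr1 : Filter.limsup (fun t => regretObs1 aobs iseq jseq t) Filter.atTop ≤ ε)
    (hr2 : Filter.limsup (fun t => regretObs2 aobs iseq jseq t) Filter.atTop ≤ ε) :
    Filter.limsup (fun t => brVal1 M (empFreq jseq t)) Filter.atTop ≤ v + 2 * (c + 1) * ε ∧
      v - 2 * (c + 1) * ε ≤ Filter.liminf (fun t => brVal2 M (empFreq iseq t)) Filter.atTop := by
  obtain ⟨t₀, herr⟩ := herr
  have hcε : 0 ≤ c * ε := mul_nonneg hc hε.le
  have key : ∀ t : ℕ, 1 ≤ t →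
      brVal1 M (empFreq jseq t) ≤ v + regretObs1 aobs iseq jseq t + regretObs2 aobs iseq jseq t
        + 2 * ((t₀:ℝ)/t + c*ε) ∧
      v - regretObs1 aobs iseq jseq t - regretObs2 aobs iseq jseq t
        - 2 * ((t₀:ℝ)/t + c*ε) ≤ brVal2 M (empFreq iseq t) := by
    intro t ht
    have hT : (0:ℝ) < t := by exact_mod_cast ht
    set E : ℝ := (t₀:ℝ) + t * (c*ε) with hEdef
    have habs1 : ∀ i : Fin (m+1),
        |(∑ s ∈ Finset.Icc 1 t, M i (jseq s)) - ∑ s ∈ Finset.Icc 1 t, aobs s i (jseq s)| ≤ E := by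
      intro i
      refine abs_sum_sub_le t₀ t _ hcε _ _ (fun s => ?_) (fun s hs => ?_)
      · have h1 := hM i (jseq s); have h2 := haobs s i (jseq s)
        rw [abs_sub_le_iff]
        exact ⟨by linarith [h1.2, h2.1], by linarith [h1.1, h2.2]⟩
      · rw [abs_sub_comm]; exact (herr s hs i (jseq s)).le
    have habs2 : ∀ j : Fin (n+1),
        |(∑ s ∈ Finset.Icc 1 t, M (iseq s) j) - ∑ s ∈ Finset.Icc 1 t, aobs s (iseq s) j| ≤ E := by
      intro j
      refine abs_sum_sub_le t₀ t _ hcε _ _ (fun s => ?_) (fun s hs => ?_)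
      · have h1 := hM (iseq s) j; have h2 := haobs s (iseq s) j
        rw [abs_sub_le_iff]
        exact ⟨by linarith [h1.2, h2.1], by linarith [h1.1, h2.2]⟩
      · rw [abs_sub_comm]; exact (herr s hs (iseq s) j).le
    have hA : brVal1 M (empFreq jseq t)
        = (Finset.univ.sup' Finset.univ_nonempty
            (fun i => ∑ s ∈ Finset.Icc 1 t, M i (jseq s))) / t := by
      rw [brVal1_eq, ← sup'_div_const Finset.univ_nonempty _ hT]
      exact Finset.sup'_congr _ rfl fun i _ => sum_mul_empFreq jseq t (fun j => M i j)
    have hB : brVal2 M (empFreq iseq t)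
        = (Finset.univ.inf' Finset.univ_nonempty
            (fun j => ∑ s ∈ Finset.Icc 1 t, M (iseq s) j)) / t := by
      rw [brVal2_eq, ← inf'_div_const Finset.univ_nonempty _ hT]
      refine Finset.inf'_congr _ rfl fun j _ => ?_
      rw [← sum_mul_empFreq iseq t (fun i => M i j)]
      exact Finset.sum_congr rfl fun i _ => by ring
    have hsum1 : ∑ s ∈ Finset.Icc 1 t, (1 - aobs s (iseq s) (jseq s))
        = (t:ℝ) - ∑ s ∈ Finset.Icc 1 t, aobs s (iseq s) (jseq s) := by
      rw [Finset.sum_sub_distrib, Finset.sum_const, Nat.card_Icc, Nat.add_sub_cancel,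
        nsmul_eq_mul, mul_one]
    have hsup2 : (Finset.univ.sup' Finset.univ_nonempty
          (fun j => ∑ s ∈ Finset.Icc 1 t, (1 - aobs s (iseq s) j)))
        = (t:ℝ) - Finset.univ.inf' Finset.univ_nonempty
            (fun j => ∑ s ∈ Finset.Icc 1 t, aobs s (iseq s) j) := by
      rw [← sup'_const_sub Finset.univ_nonempty _ (t:ℝ)]
      refine Finset.sup'_congr _ rfl fun j _ => ?_
      rw [Finset.sum_sub_distrib, Finset.sum_const, Nat.card_Icc, Nat.add_sub_cancel,
        nsmul_eq_mul, mul_one]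
    have hr2eq : regretObs2 aobs iseq jseq t
        = (∑ s ∈ Finset.Icc 1 t, aobs s (iseq s) (jseq s)) / t
          - (Finset.univ.inf' Finset.univ_nonempty
              (fun j => ∑ s ∈ Finset.Icc 1 t, aobs s (iseq s) j)) / t := by
      unfold regretObs2
      rw [hsup2, hsum1]
      ring
    have hr1eq : regretObs1 aobs iseq jseq t
        = (Finset.univ.sup' Finset.univ_nonempty
            (fun i => ∑ s ∈ Finset.Icc 1 t, aobs s i (jseq s))) / t
          - (∑ s ∈ Finset.Icc 1 t, aobs s (iseq s) (jseq s)) / t := rfl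
    have hs1 : Finset.univ.sup' Finset.univ_nonempty
          (fun i => ∑ s ∈ Finset.Icc 1 t, M i (jseq s))
        ≤ Finset.univ.sup' Finset.univ_nonempty
            (fun i => ∑ s ∈ Finset.Icc 1 t, aobs s i (jseq s)) + E := by
      refine Finset.sup'_le _ _ fun i _ => ?_
      have h := abs_le.1 (habs1 i)
      have h2 := Finset.le_sup' (fun i => ∑ s ∈ Finset.Icc 1 t, aobs s i (jseq s))
        (Finset.mem_univ i)
      linarith [h.2]
    have hs2 : Finset.univ.inf' Finset.univ_nonempty
          (fun j => ∑ s ∈ Finset.Icc 1 t, aobs s (iseq s) j)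
        ≤ Finset.univ.inf' Finset.univ_nonempty
            (fun j => ∑ s ∈ Finset.Icc 1 t, M (iseq s) j) + E := by
      obtain ⟨j, hj, hje⟩ := Finset.exists_mem_eq_inf' Finset.univ_nonempty
        (fun j => ∑ s ∈ Finset.Icc 1 t, M (iseq s) j)
      rw [hje]
      have h := abs_le.1 (habs2 j)
      have h2 := Finset.inf'_le (fun j => ∑ s ∈ Finset.Icc 1 t, aobs s (iseq s) j) hj
      linarith [h.1]
    have hAv : v ≤ brVal1 M (empFreq jseq t) := v_le_brVal1 hM hv (empFreq_mixed jseq ht)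
    have hBv : brVal2 M (empFreq iseq t) ≤ v := brVal2_le_v hM hv (empFreq_mixed iseq ht)
    have hEt : E / t = (t₀:ℝ)/t + c*ε := by
      rw [hEdef, add_div, mul_comm ((t:ℝ)) (c*ε), mul_div_assoc, div_self hT.ne', mul_one]
    have d1 : (Finset.univ.sup' Finset.univ_nonempty
          (fun i => ∑ s ∈ Finset.Icc 1 t, M i (jseq s))) / t
        ≤ (Finset.univ.sup' Finset.univ_nonempty
            (fun i => ∑ s ∈ Finset.Icc 1 t, aobs s i (jseq s))) / t + E / t := by
      rw [← add_div]
      exact div_le_div_of_nonneg_right hs1 hT.le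
    have d2 : (Finset.univ.inf' Finset.univ_nonempty
          (fun j => ∑ s ∈ Finset.Icc 1 t, aobs s (iseq s) j)) / t
        ≤ (Finset.univ.inf' Finset.univ_nonempty
            (fun j => ∑ s ∈ Finset.Icc 1 t, M (iseq s) j)) / t + E / t := by
      rw [← add_div]
      exact div_le_div_of_nonneg_right hs2 hT.le
    constructor
    · rw [hA]; rw [hB] at hBv; linarith
    · rw [hB]; rw [hA] at hAv; linarith
  have hub1 : ∀ t : ℕ, 1 ≤ t → regretObs1 aobs iseq jseq t ≤ 1 := by
    intro t ht
    have hT : (0:ℝ) < t := by exact_mod_cast ht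
    unfold regretObs1 gmaxObs avgObs
    have h1 : (Finset.univ.sup' Finset.univ_nonempty
        (fun i => ∑ s ∈ Finset.Icc 1 t, aobs s i (jseq s))) ≤ (t:ℝ) := by
      refine Finset.sup'_le _ _ fun i _ => ?_
      calc ∑ s ∈ Finset.Icc 1 t, aobs s i (jseq s) ≤ ∑ s ∈ Finset.Icc 1 t, (1:ℝ) :=
            Finset.sum_le_sum fun s _ => (haobs s i (jseq s)).2
        _ = t := by rw [Finset.sum_const, Nat.card_Icc, Nat.add_sub_cancel, nsmul_eq_mul, mul_one]
    have h2 : (0:ℝ) ≤ ∑ s ∈ Finset.Icc 1 t, aobs s (iseq s) (jseq s) :=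
      Finset.sum_nonneg fun s _ => (haobs s (iseq s) (jseq s)).1
    have h3 : (Finset.univ.sup' Finset.univ_nonempty
        (fun i => ∑ s ∈ Finset.Icc 1 t, aobs s i (jseq s))) / t ≤ 1 := by
      rw [div_le_one hT]; exact h1
    have h4 : (0:ℝ) ≤ (∑ s ∈ Finset.Icc 1 t, aobs s (iseq s) (jseq s)) / t :=
      div_nonneg h2 hT.le
    linarith
  have hub2 : ∀ t : ℕ, 1 ≤ t → regretObs2 aobs iseq jseq t ≤ 1 := by
    intro t ht
    have hT : (0:ℝ) < t := by exact_mod_cast ht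
    unfold regretObs2
    have h1 : (Finset.univ.sup' Finset.univ_nonempty
        (fun j => ∑ s ∈ Finset.Icc 1 t, (1 - aobs s (iseq s) j))) ≤ (t:ℝ) := by
      refine Finset.sup'_le _ _ fun j _ => ?_
      calc ∑ s ∈ Finset.Icc 1 t, (1 - aobs s (iseq s) j) ≤ ∑ s ∈ Finset.Icc 1 t, (1:ℝ) :=
            Finset.sum_le_sum fun s _ => by linarith [(haobs s (iseq s) j).1]
        _ = t := by rw [Finset.sum_const, Nat.card_Icc, Nat.add_sub_cancel, nsmul_eq_mul, mul_one]
    have h2 : (0:ℝ) ≤ ∑ s ∈ Finset.Icc 1 t, (1 - aobs s (iseq s) (jseq s)) :=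
      Finset.sum_nonneg fun s _ => by linarith [(haobs s (iseq s) (jseq s)).2]
    have h3 : (Finset.univ.sup' Finset.univ_nonempty
        (fun j => ∑ s ∈ Finset.Icc 1 t, (1 - aobs s (iseq s) j))) / t ≤ 1 := by
      rw [div_le_one hT]; exact h1
    have h4 : (0:ℝ) ≤ (∑ s ∈ Finset.Icc 1 t, (1 - aobs s (iseq s) (jseq s))) / t :=
      div_nonneg h2 hT.le
    linarith
  have main1 : ∀ δ : ℝ, 0 < δ →
      Filter.limsup (fun t => brVal1 M (empFreq jseq t)) Filter.atTop
        ≤ v + 2*(c+1)*ε + 4*δ := by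
    intro δ hδ
    have hbdd1 : Filter.IsBoundedUnder (· ≤ ·) Filter.atTop
        (fun t => regretObs1 aobs iseq jseq t) :=
      ⟨1, Filter.eventually_map.2 ((Filter.eventually_ge_atTop 1).mono fun t ht => hub1 t ht)⟩
    have hbdd2 : Filter.IsBoundedUnder (· ≤ ·) Filter.atTop
        (fun t => regretObs2 aobs iseq jseq t) :=
      ⟨1, Filter.eventually_map.2 ((Filter.eventually_ge_atTop 1).mono fun t ht => hub2 t ht)⟩
    have ev1 : ∀ᶠ t in Filter.atTop, regretObs1 aobs iseq jseq t < ε + δ :=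
      Filter.eventually_lt_of_limsup_lt (lt_of_le_of_lt hr1 (by linarith)) hbdd1
    have ev2 : ∀ᶠ t in Filter.atTop, regretObs2 aobs iseq jseq t < ε + δ :=
      Filter.eventually_lt_of_limsup_lt (lt_of_le_of_lt hr2 (by linarith)) hbdd2
    have ev3 : ∀ᶠ t : ℕ in Filter.atTop, (t₀:ℝ)/t < δ :=
      (tendsto_const_div_atTop_nhds_zero_nat (t₀:ℝ)).eventually (gt_mem_nhds hδ)
    refine Filter.limsup_le_of_le (Filter.isCoboundedUnder_le_of_eventually_le Filter.atTop
      ((Filter.eventually_ge_atTop 1).mono fun t ht =>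
        v_le_brVal1 hM hv (empFreq_mixed jseq ht))) ?_
    filter_upwards [ev1, ev2, ev3, Filter.eventually_ge_atTop 1] with t h1 h2 h3 h4
    have hk := (key t h4).1
    have hexp : 2*(c+1)*ε = 2*(c*ε) + 2*ε := by ring
    linarith
  have main2 : ∀ δ : ℝ, 0 < δ →
      v - 2*(c+1)*ε - 4*δ
        ≤ Filter.liminf (fun t => brVal2 M (empFreq iseq t)) Filter.atTop := by
    intro δ hδ
    have hbdd1 : Filter.IsBoundedUnder (· ≤ ·) Filter.atTop
        (fun t => regretObs1 aobs iseq jseq t) :=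
      ⟨1, Filter.eventually_map.2 ((Filter.eventually_ge_atTop 1).mono fun t ht => hub1 t ht)⟩
    have hbdd2 : Filter.IsBoundedUnder (· ≤ ·) Filter.atTop
        (fun t => regretObs2 aobs iseq jseq t) :=
      ⟨1, Filter.eventually_map.2 ((Filter.eventually_ge_atTop 1).mono fun t ht => hub2 t ht)⟩
    have ev1 : ∀ᶠ t in Filter.atTop, regretObs1 aobs iseq jseq t < ε + δ :=
      Filter.eventually_lt_of_limsup_lt (lt_of_le_of_lt hr1 (by linarith)) hbdd1
    have ev2 : ∀ᶠ t in Filter.atTop, regretObs2 aobs iseq jseq t < ε + δ :=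
      Filter.eventually_lt_of_limsup_lt (lt_of_le_of_lt hr2 (by linarith)) hbdd2
    have ev3 : ∀ᶠ t : ℕ in Filter.atTop, (t₀:ℝ)/t < δ :=
      (tendsto_const_div_atTop_nhds_zero_nat (t₀:ℝ)).eventually (gt_mem_nhds hδ)
    refine Filter.le_liminf_of_le (Filter.isCoboundedUnder_ge_of_eventually_le Filter.atTop
      ((Filter.eventually_ge_atTop 1).mono fun t ht =>
        brVal2_le_v hM hv (empFreq_mixed iseq ht))) ?_
    filter_upwards [ev1, ev2, ev3, Filter.eventually_ge_atTop 1] with t h1 h2 h3 h4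
    have hk := (key t h4).2
    have hexp : 2*(c+1)*ε = 2*(c*ε) + 2*ε := by ring
    linarith
  constructor
  · refine le_of_forall_pos_le_add fun δ hδ => ?_
    have := main1 (δ/4) (by linarith)
    linarith
  · refine le_of_forall_pos_le_add fun δ hδ => ?_
    have := main2 (δ/4) (by linarith)
    linarith
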